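/- arXiv:2407.15898 — 3 statements merged into one kernel-verified Lean document; each statement's English description precedes it below -/
import Mathlib

section
/- Let Γ be a signed graph of order n ≥ 4 and let x be a unit eigenvector of A(Γ) associated with the largest eigenvalue λ1(Γ). If x vanishes at three distinct vertices of Γ, then λ1(Γ) ≤ n − 4. -/
structure SignedGraph (V : Type*) where
  G : SimpleGraph V
  sign : V → V → ℤ
  sign_symm : ∀ u v, sign u v = sign v u
  sign_mem : ∀ u v, G.Adj u v → sign u v = 1 ∨ sign u v = -1
  sign_not : ∀ u v, ¬ G.Adj u v → sign u v = 0

namespace SignedGraph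

variable {V : Type*}

/-- The adjacency matrix of a signed graph, over `ℝ`. -/
noncomputable def adjMatrix (Γ : SignedGraph V) : Matrix V V ℝ :=
  fun u v => (Γ.sign u v : ℝ)

/-- The largest eigenvalue `λ₁` of a signed graph. -/
noncomputable def lambda1 (Γ : SignedGraph V) [Fintype V] : ℝ :=
  letI := Classical.decEq V
  sSup (spectrum ℝ Γ.adjMatrix)

/-- The smallest eigenvalue `λₙ` of a signed graph. -/
noncomputable def lambdaMin (Γ : SignedGraph V) [Fintype V] : ℝ :=
  letI := Classical.decEq V
  sInf (spectrum ℝ Γ.adjMatrix)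

/-- The spectral radius `ρ = max {λ₁, -λₙ}` of a signed graph. -/
noncomputable def rho (Γ : SignedGraph V) [Fintype V] : ℝ :=
  max Γ.lambda1 (-Γ.lambdaMin)

/-- The sign (product of edge signs) of a walk. -/
def walkSign (Γ : SignedGraph V) {G' : SimpleGraph V} : ∀ {u v : V}, G'.Walk u v → ℤ
  | _, _, .nil => 1
  | _, _, .cons (u := a) (v := b) _ p => Γ.sign a b * walkSign Γ p

/-- A signed graph is balanced if every cycle is positive. -/
def Balanced (Γ : SignedGraph V) : Prop :=
  ∀ (u : V) (w : Γ.G.Walk u u), w.IsCycle → Γ.walkSign w = 1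

def Unbalanced (Γ : SignedGraph V) : Prop := ¬ Γ.Balanced

/-- `Γ` has a negative cycle of length `k`. -/
def HasNegCycleOfLength (Γ : SignedGraph V) (k : ℕ) : Prop :=
  ∃ (u : V) (w : Γ.G.Walk u u), w.IsCycle ∧ Γ.walkSign w = -1 ∧ w.length = k

/-- Switching equivalence: same underlying graph and signs related by a switching function. -/
def SwitchingEquivalent (Γ Γ' : SignedGraph V) : Prop :=
  Γ.G = Γ'.G ∧ ∃ s : V → ℤ, (∀ v, s v = 1 ∨ s v = -1) ∧
    ∀ u v, Γ'.sign u v = s u * Γ.sign u v * s v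

/-- Switching isomorphism. -/
def SwitchingIsomorphic {V' : Type*} (Γ : SignedGraph V) (Γ' : SignedGraph V') : Prop :=
  ∃ (e : V ≃ V') (s : V → ℤ), (∀ v, s v = 1 ∨ s v = -1) ∧
    (∀ u v, Γ'.G.Adj (e u) (e v) ↔ Γ.G.Adj u v) ∧
    (∀ u v, Γ'.sign (e u) (e v) = s u * Γ.sign u v * s v)

/-- Build a signed graph from a symmetric sign function with values in `{0, 1, -1}`. -/
def ofSign (s : V → V → ℤ) (hsymm : ∀ u v, s u v = s v u)
    (hloop : ∀ v, s v v = 0)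
    (hval : ∀ u v, s u v = 0 ∨ s u v = 1 ∨ s u v = -1) : SignedGraph V where
  G := { Adj := fun u v => s u v ≠ 0
         symm := ⟨fun u v h => by
           show s v u ≠ 0
           rw [hsymm v u]; exact h⟩
         loopless := ⟨fun v h => h (hloop v)⟩ }
  sign := s
  sign_symm := hsymm
  sign_mem := fun u v h => (hval u v).resolve_left h
  sign_not := fun u v h => not_not.mp h

/-- Build a signed graph on `Fin n` from a sign function on ordered pairs of naturals. -/
def ofMinMaxAux (n : ℕ) (aux : ℕ → ℕ → ℤ) (h0 : ∀ a, aux a a = 0)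
    (hval : ∀ a b, aux a b = 0 ∨ aux a b = 1 ∨ aux a b = -1) : SignedGraph (Fin n) :=
  ofSign (fun i j => aux (min i.val j.val) (max i.val j.val))
    (fun i j => by
      show aux (min i.val j.val) (max i.val j.val) = aux (min j.val i.val) (max j.val i.val)
      rw [min_comm, max_comm])
    (fun i => by
      show aux (min i.val i.val) (max i.val i.val) = 0
      rw [min_self, max_self, h0])
    (fun i j => hval _ _)

def gammaNAux : ℕ → ℕ → ℤ := fun a b =>
  if a = b then 0
  else if a = 0 ∧ b = 1 then -1
  else if a = 0 ∧ b = 2 then 1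
  else if a = 1 ∧ b = 3 then 1
  else if 2 ≤ a ∧ a < b ∧ ¬(a = 2 ∧ b = 3) then 1
  else 0

/-- The signed graph `Γₙ`: a copy of `K_{n-2}` (on `{2, …, n-1}`) with the edge `{2,3}`
removed, together with two new vertices `0, 1` and edges `{0,1}` (negative),
`{0,2}` and `{1,3}` (positive); all other edges positive. -/
def GammaN (n : ℕ) : SignedGraph (Fin n) :=
  ofMinMaxAux n gammaNAux (fun a => by simp [gammaNAux])
    (fun a b => by unfold gammaNAux; split_ifs <;> simp)

def gammaNTauAux (τ : ℕ) : ℕ → ℕ → ℤ := fun a b =>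
  if a = b then 0
  else if a = 0 ∧ b = 1 then -1
  else if a = 0 ∧ b = 3 then 1
  else if a = 0 ∧ 4 ≤ b ∧ b ≤ τ + 3 then 1
  else if a = 1 ∧ b = 2 then 1
  else if a = 2 ∧ τ + 4 ≤ b then 1
  else if a = 3 ∧ 4 ≤ b then 1
  else if 4 ≤ a ∧ a < b then 1
  else 0

/-- The signed graph `Γ_{n,τ}`: here `v₁ = 0`, `v₂ = 1`, `v₃ = 2`, `v₅ = 3`,
`X = {4, …, τ+3}`, `Y = {τ+4, …, n-1}` (with `v₄ = τ+4 ∈ Y`); the edge `{0,1}` is the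
unique negative edge. -/
def GammaNTau (n τ : ℕ) : SignedGraph (Fin n) :=
  ofMinMaxAux n (gammaNTauAux τ) (fun a => by simp [gammaNTauAux])
    (fun a b => by unfold gammaNTauAux; split_ifs <;> simp)

/-- The negation `-Γ` of a signed graph. -/
def neg (Γ : SignedGraph V) : SignedGraph V where
  G := Γ.G
  sign := fun u v => - Γ.sign u v
  sign_symm := fun u v => by
    show -Γ.sign u v = -Γ.sign v u
    rw [Γ.sign_symm]
  sign_mem := fun u v h => by
    show -Γ.sign u v = 1 ∨ -Γ.sign u v = -1
    rcases Γ.sign_mem u v h with h' | h' <;> simp [h']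
  sign_not := fun u v h => by
    show -Γ.sign u v = 0
    simp [Γ.sign_not u v h]

/-- The induced signed subgraph on a set of vertices. -/
def induce (Γ : SignedGraph V) (S : Set V) : SignedGraph S where
  G := { Adj := fun u v => Γ.G.Adj u v
         symm := ⟨fun u v h => Γ.G.adj_symm h⟩
         loopless := ⟨fun u h => Γ.G.irrefl h⟩ }
  sign := fun u v => Γ.sign u v
  sign_symm := fun u v => Γ.sign_symm u v
  sign_mem := fun u v h => Γ.sign_mem u v h
  sign_not := fun u v h => Γ.sign_not u v h

/-- `S` is a balanced clique of `Γ`: it induces a complete subgraph which is balanced. -/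
def IsBalancedClique [DecidableEq V] (Γ : SignedGraph V) (S : Finset V) : Prop :=
  (∀ u ∈ S, ∀ v ∈ S, u ≠ v → Γ.G.Adj u v) ∧ (Γ.induce (S : Set V)).Balanced

end SignedGraph

/-! At a vertex `v` where `|x|` is maximal, the eigenvalue equation bounds `λ₁ |x v|` by the sum
of `|x u|` over the vertices `u ≠ v` where `x` does not vanish; there are at most `n - 4` of
them, each contributing at most `|x v|`. -/

namespace SignedGraph

open Finset Matrix

variable {V : Type*}

theorem abs_adjMatrix_le_one (Γ : SignedGraph V) (u w : V) : |Γ.adjMatrix u w| ≤ 1 := by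
  by_cases h : Γ.G.Adj u w
  · rcases Γ.sign_mem u w h with h' | h' <;> simp [adjMatrix, h']
  · simp [adjMatrix, Γ.sign_not u w h]

@[simp]
theorem adjMatrix_self (Γ : SignedGraph V) (v : V) : Γ.adjMatrix v v = 0 := by
  simp [adjMatrix, Γ.sign_not v v (Γ.G.irrefl)]

variable [Fintype V]

theorem abs_mul_le_sum_abs_of_mulVec_eq (Γ : SignedGraph V) {x : V → ℝ} {μ : ℝ}
    (hx : Γ.adjMatrix *ᵥ x = μ • x) (v : V) (s : Finset V) (hs : ∀ u ∉ s, u = v ∨ x u = 0) :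
    |μ * x v| ≤ ∑ u ∈ s, |x u| :=
  calc |μ * x v| = |∑ u, Γ.adjMatrix v u * x u| := by
        rw [← smul_eq_mul, ← Pi.smul_apply, ← hx]; rfl
    _ ≤ ∑ u, |Γ.adjMatrix v u * x u| := abs_sum_le_sum_abs _ _
    _ = ∑ u ∈ s, |Γ.adjMatrix v u * x u| := by
        refine (sum_subset (subset_univ s) fun u _ hu => ?_).symm
        rcases hs u hu with rfl | hxu <;> simp [*]
    _ ≤ ∑ u ∈ s, |x u| := by
        refine sum_le_sum fun u _ => ?_
        rw [abs_mul]
        exact mul_le_of_le_one_left (abs_nonneg _) (Γ.abs_adjMatrix_le_one v u)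

theorem le_card_sub_of_mulVec_eq_of_eq_zero (Γ : SignedGraph V) {x : V → ℝ} {μ : ℝ}
    (hx : Γ.adjMatrix *ᵥ x = μ • x) (hx0 : x ≠ 0) (Z : Finset V) (hZ : ∀ z ∈ Z, x z = 0) :
    μ ≤ (Fintype.card V : ℝ) - (#Z + 1) := by
  classical
  obtain ⟨u, hu⟩ := Function.ne_iff.mp hx0
  obtain ⟨v, -, hv⟩ := exists_max_image univ (fun v => |x v|) ⟨u, mem_univ u⟩
  have hxv : 0 < |x v| := (abs_pos.mpr hu).trans_le (hv u (mem_univ u))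
  have hvZ : v ∉ Z := fun h => (abs_pos.mp hxv) (hZ v h)
  set s := univ \ insert v Z
  have hs : ∀ u ∉ s, u = v ∨ x u = 0 := by
    intro u hu
    simp only [s, mem_sdiff, mem_univ, true_and, not_not, mem_insert] at hu
    exact hu.imp_right (hZ u)
  have hcard : (#s : ℝ) = Fintype.card V - (#Z + 1) := by
    have hle := card_le_univ (insert v Z)
    rw [card_insert_of_notMem hvZ] at hle
    rw [card_univ_sdiff, card_insert_of_notMem hvZ, Nat.cast_sub hle]
    push_cast; ring
  refine le_of_mul_le_mul_right ?_ hxv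
  calc μ * |x v| ≤ |μ * x v| := by rw [abs_mul]; gcongr; exact le_abs_self μ
    _ ≤ ∑ u ∈ s, |x u| := Γ.abs_mul_le_sum_abs_of_mulVec_eq hx v s hs
    _ ≤ ∑ _u ∈ s, |x v| := sum_le_sum fun u _ => hv u (mem_univ u)
    _ = (Fintype.card V - (#Z + 1)) * |x v| := by rw [sum_const, nsmul_eq_mul, hcard]

end SignedGraph

open SignedGraph in
theorem lambda1_le_of_three_zero_entries_general {V : Type*} [Fintype V] (Γ : SignedGraph V)
    (x : V → ℝ)
    (heig : Γ.adjMatrix.mulVec x = Γ.lambda1 • x)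
    (hunit : ∑ v : V, x v ^ 2 = 1)
    (a b c : V) (hab : a ≠ b) (hac : a ≠ c) (hbc : b ≠ c)
    (hxa : x a = 0) (hxb : x b = 0) (hxc : x c = 0) :
    Γ.lambda1 ≤ (Fintype.card V : ℝ) - 4 := by
  classical
  have hx0 : x ≠ 0 := by
    rintro rfl
    simp at hunit
  have hZ : ({a, b, c} : Finset V).card = 3 :=
    Finset.card_eq_three.mpr ⟨a, b, c, hab, hac, hbc, rfl⟩
  calc Γ.lambda1 ≤ (Fintype.card V : ℝ) - (({a, b, c} : Finset V).card + 1) :=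
        Γ.le_card_sub_of_mulVec_eq_of_eq_zero heig hx0 {a, b, c} (by simp [hxa, hxb, hxc])
    _ = (Fintype.card V : ℝ) - 4 := by rw [hZ]; norm_num

open SignedGraph in
/-- If a unit eigenvector for the largest eigenvalue of a signed graph of order
`n ≥ 4` vanishes at three distinct vertices, then `λ₁(Γ) ≤ n − 4`. -/
theorem lambda1_le_of_three_zero_entries {V : Type*} [Fintype V] (Γ : SignedGraph V)
    (hn : 4 ≤ Fintype.card V) (x : V → ℝ)
    (heig : Γ.adjMatrix.mulVec x = Γ.lambda1 • x)
    (hunit : ∑ v : V, x v ^ 2 = 1)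
    (a b c : V) (hab : a ≠ b) (hac : a ≠ c) (hbc : b ≠ c)
    (hxa : x a = 0) (hxb : x b = 0) (hxc : x c = 0) :
    Γ.lambda1 ≤ (Fintype.card V : ℝ) - 4 :=
  lambda1_le_of_three_zero_entries_general Γ x heig hunit a b c hab hac hbc hxa hxb hxc
end

section
/- Let n ≥ 7 and let Γ be a signed graph maximizing the spectral radius among all unbalanced signed graphs of order n that contain no negative cycle of length 3 and no negative cycle of length 4. Then ρ(Γ) = λ1(Γ), that is, the spectral radius of Γ is attained by its largest eigenvalue. -/
universe u v

/-!
Suppose `ρ(Γ) ≠ λ₁(Γ)`, so that `ρ(Γ) = -λₙ(Γ)`. For any vector `x`, the pairs `uv` with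
`σ(uv) x_u x_v < 0` span a triangle-free graph, because three of them would form a negative
triangle of `Γ`. Only these pairs contribute positively to `-xᵀA(Γ)x`, so the weighted Mantel
inequality `∑_{uv adjacent} p_u p_v ≤ (∑ p)² / 2` for `p = |x|`, followed by Cauchy–Schwarz, gives
`-λₙ(Γ) ≤ n / 2`. The graph `Γₙ` is an admissible competitor: it has the negative 5-cycle
`0 1 3 4 2`, but no negative triangle or quadrangle. Its quadratic form on the indicator vector of
`{2, …, n-1}` gives `λ₁(Γₙ) ≥ n - 3 - 2 / (n - 2) > n / 2` for `n ≥ 7`, so `Γₙ` beats `Γ`,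
contradicting maximality.
-/

open Matrix

namespace Matrix.IsHermitian

variable {n : Type*} [Fintype n] [DecidableEq n] {A : Matrix n n ℝ}

theorem dotProduct_mulVec_le_sSup_spectrum_mul (hA : A.IsHermitian) (x : n → ℝ) :
    x ⬝ᵥ A *ᵥ x ≤ sSup (spectrum ℝ A) * (x ⬝ᵥ x) := by
  set c := sSup (spectrum ℝ A)
  have hB : (algebraMap ℝ (Matrix n n ℝ) c - A).IsHermitian := by
    refine IsHermitian.sub ?_ hA
    rw [algebraMap_eq_diagonal]
    exact isHermitian_diagonal _
  have hpsd : (algebraMap ℝ (Matrix n n ℝ) c - A).PosSemidef := by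
    refine hB.posSemidef_iff_eigenvalues_nonneg.mpr fun i => ?_
    have hmem := hB.eigenvalues_mem_spectrum_real i
    rw [← spectrum.singleton_sub_eq] at hmem
    obtain ⟨_, rfl, μ, hμ, hi⟩ := hmem
    rw [Pi.zero_apply, ← hi, sub_nonneg]
    exact le_csSup A.finite_real_spectrum.bddAbove hμ
  simpa [sub_mulVec, Algebra.algebraMap_eq_smul_one, smul_mulVec, dotProduct_sub] using
    hpsd.dotProduct_mulVec_nonneg x

theorem exists_mulVec_eq_sInf_spectrum_smul [Nonempty n] (hA : A.IsHermitian) :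
    ∃ x ≠ 0, A *ᵥ x = sInf (spectrum ℝ A) • x := by
  have hmem : sInf (spectrum ℝ A) ∈ Set.range hA.eigenvalues := by
    rw [← hA.spectrum_real_eq_range_eigenvalues]
    exact (hA.spectrum_real_eq_range_eigenvalues ▸ Set.range_nonempty _).csInf_mem
      A.finite_real_spectrum
  obtain ⟨i, hi⟩ := hmem
  exact ⟨_, by simpa using hA.eigenvectorBasis.orthonormal.ne_zero i,
    hi ▸ hA.mulVec_eigenvectorBasis i⟩

end Matrix.IsHermitian

namespace SimpleGraph

variable {V : Type*} [Fintype V] {G : SimpleGraph V} [DecidableRel G.Adj]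

theorem CliqueFree.sum_mul_sum_neighborFinset_le (hG : G.CliqueFree 3) {p : V → ℝ}
    (hp : ∀ v, 0 ≤ p v) :
    ∑ u, p u * ∑ v ∈ G.neighborFinset u, p v ≤ (∑ u, p u) ^ 2 / 2 := by
  classical
  cases isEmpty_or_nonempty V
  · simp
  set s : V → ℝ := fun u => ∑ v ∈ G.neighborFinset u, p v
  set P := ∑ u, p u
  -- take `w` of maximal weighted degree: neighbours of neighbours of `w` are not neighbours of `w`
  obtain ⟨w, -, hw⟩ := Finset.exists_max_image Finset.univ s Finset.univ_nonempty
  have hcompl : ∑ u ∈ (G.neighborFinset w)ᶜ, p u = P - s w := by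
    rw [eq_sub_iff_add_eq]
    exact Finset.sum_compl_add_sum _ _
  have hnbr : ∀ u ∈ G.neighborFinset w, s u ≤ P - s w := by
    intro u hu
    rw [← hcompl]
    refine Finset.sum_le_sum_of_subset_of_nonneg (fun v hv => ?_) fun v _ _ => hp v
    rw [mem_neighborFinset] at hu hv
    rw [Finset.mem_compl, mem_neighborFinset]
    exact fun hwv => hG {w, u, v} (is3Clique_triple_iff.mpr ⟨hu, hwv, hv⟩)
  calc ∑ u, p u * s u
      = ∑ u ∈ G.neighborFinset w, p u * s u + ∑ u ∈ (G.neighborFinset w)ᶜ, p u * s u :=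
        (Finset.sum_add_sum_compl _ _).symm
    _ ≤ ∑ u ∈ G.neighborFinset w, p u * (P - s w) + ∑ u ∈ (G.neighborFinset w)ᶜ, p u * s w := by
        gcongr with u hu u
        · exact hp u
        · exact hnbr u hu
        · exact hp u
        · exact hw u (Finset.mem_univ u)
    _ = 2 * (s w * (P - s w)) := by rw [← Finset.sum_mul, ← Finset.sum_mul, hcompl]; ring
    _ ≤ P ^ 2 / 2 := by nlinarith [sq_nonneg (P - 2 * s w)]

end SimpleGraph

namespace SignedGraph

variable {V : Type*} (Γ : SignedGraph V)

theorem sign_self (v : V) : Γ.sign v v = 0 :=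
  Γ.sign_not v v Γ.G.irrefl

theorem adj_of_sign_ne_zero {u v : V} (h : Γ.sign u v ≠ 0) : Γ.G.Adj u v :=
  not_not.mp (mt (Γ.sign_not u v) h)

theorem abs_sign_le_one (u v : V) : |Γ.sign u v| ≤ 1 := by
  by_cases h : Γ.G.Adj u v
  · rcases Γ.sign_mem u v h with h | h <;> simp [h]
  · simp [Γ.sign_not u v h]

theorem adjMatrix_isHermitian : Γ.adjMatrix.IsHermitian := by
  ext u v
  simp [adjMatrix, Γ.sign_symm]

theorem dotProduct_adjMatrix_mulVec_le_lambda1 [Fintype V] (x : V → ℝ) :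
    x ⬝ᵥ Γ.adjMatrix *ᵥ x ≤ Γ.lambda1 * (x ⬝ᵥ x) :=
  letI := Classical.decEq V
  Γ.adjMatrix_isHermitian.dotProduct_mulVec_le_sSup_spectrum_mul x

@[simp]
theorem walkSign_nil {G' : SimpleGraph V} {u : V} : Γ.walkSign (.nil : G'.Walk u u) = 1 := rfl

@[simp]
theorem walkSign_cons {G' : SimpleGraph V} {u v w : V} (h : G'.Adj u v) (p : G'.Walk v w) :
    Γ.walkSign (.cons h p) = Γ.sign u v * Γ.walkSign p := rfl

theorem walkSign_eq_prod_getVert {G' : SimpleGraph V} {u v : V} (w : G'.Walk u v) :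
    Γ.walkSign w = ∏ i ∈ Finset.range w.length, Γ.sign (w.getVert i) (w.getVert (i + 1)) := by
  induction w with
  | nil => rfl
  | cons h p ih => simp [ih, Finset.prod_range_succ', mul_comm]

theorem walkSign_map {W : Type*} {Γ : SignedGraph V} {Δ : SignedGraph W} (f : Γ.G →g Δ.G)
    (hf : ∀ u v, Δ.sign (f u) (f v) = Γ.sign u v) {u v : V} (w : Γ.G.Walk u v) :
    Δ.walkSign (w.map f) = Γ.walkSign w := by
  induction w with
  | nil => rfl
  | cons h p ih => simp [ih, hf]

theorem hasNegCycleOfLength_three {u v w : V} (huv : Γ.G.Adj u v) (hvw : Γ.G.Adj v w)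
    (hwu : Γ.G.Adj w u) (hsign : Γ.sign u v * Γ.sign v w * Γ.sign w u = -1) :
    Γ.HasNegCycleOfLength 3 := by
  refine ⟨u, .cons huv (.cons hvw (.cons hwu .nil)), ?_, by simpa [mul_assoc] using hsign, rfl⟩
  simp [SimpleGraph.Walk.isCycle_def, SimpleGraph.Walk.isTrail_def, huv.ne, hvw.ne, hwu.ne,
    huv.ne.symm, hwu.ne.symm, Sym2.eq, Sym2.rel_iff']

variable {Γ} in
theorem HasNegCycleOfLength.unbalanced {k : ℕ} (h : Γ.HasNegCycleOfLength k) :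
    Γ.Unbalanced := by
  obtain ⟨u, w, hw, hneg, -⟩ := h
  exact fun hbal => absurd (hbal u w hw ▸ hneg) (by decide)

theorem HasNegCycleOfLength.map {W : Type*} {Γ : SignedGraph V} {Δ : SignedGraph W} {k : ℕ}
    (f : Γ.G ↪g Δ.G) (hf : ∀ u v, Δ.sign (f u) (f v) = Γ.sign u v)
    (h : Γ.HasNegCycleOfLength k) : Δ.HasNegCycleOfLength k := by
  obtain ⟨u, w, hw, hneg, hlen⟩ := h
  exact ⟨f u, w.map f.toHom, (SimpleGraph.Walk.isCycle_map_iff_of_injective f.injective).mpr hw,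
    walkSign_map f.toHom hf w ▸ hneg, by simpa using hlen⟩

def comap {W : Type*} (e : W ≃ V) : SignedGraph W where
  G := Γ.G.comap e
  sign u v := Γ.sign (e u) (e v)
  sign_symm _ _ := Γ.sign_symm _ _
  sign_mem _ _ h := Γ.sign_mem _ _ h
  sign_not _ _ h := Γ.sign_not _ _ h

variable {Γ} in
theorem hasNegCycleOfLength_comap_iff {W : Type*} (e : W ≃ V) {k : ℕ} :
    (Γ.comap e).HasNegCycleOfLength k ↔ Γ.HasNegCycleOfLength k :=
  ⟨.map (SimpleGraph.Iso.comap e Γ.G).toEmbedding fun _ _ => rfl,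
    .map (SimpleGraph.Iso.comap e Γ.G).symm.toEmbedding fun u v =>
      show Γ.sign (e (e.symm u)) (e (e.symm v)) = _ by simp⟩

theorem lambda1_comap {W : Type*} [Fintype V] [Fintype W] (e : W ≃ V) :
    (Γ.comap e).lambda1 = Γ.lambda1 := by
  classical
  have : (Γ.comap e).adjMatrix = Matrix.reindexAlgEquiv ℝ ℝ e.symm Γ.adjMatrix := rfl
  simp only [lambda1, this, AlgEquiv.spectrum_eq]

def negTermGraph (x : V → ℝ) : SimpleGraph V where
  Adj u v := Γ.sign u v * (x u * x v) < 0
  symm := ⟨fun u v h => by rwa [Γ.sign_symm, mul_comm (x v)]⟩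
  loopless := ⟨fun v h => by simp [Γ.sign_self] at h⟩

theorem negTermGraph_cliqueFree (h3 : ¬ Γ.HasNegCycleOfLength 3) (x : V → ℝ) :
    (Γ.negTermGraph x).CliqueFree 3 := by
  classical
  intro s hs
  obtain ⟨a, b, c, hab, hac, hbc, -⟩ := SimpleGraph.is3Clique_iff.mp hs
  have hadj {u v : V} (h : (Γ.negTermGraph x).Adj u v) : Γ.G.Adj u v :=
    Γ.adj_of_sign_ne_zero fun h0 => by simp [negTermGraph, h0] at h
  have hca : (Γ.negTermGraph x).Adj c a := hac.symm
  have hab' : Γ.sign a b * (x a * x b) < 0 := hab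
  have hbc' : Γ.sign b c * (x b * x c) < 0 := hbc
  have hca' : Γ.sign c a * (x c * x a) < 0 := hca
  -- the product of the three negative terms is `σ(ab) σ(bc) σ(ca) (x_a x_b x_c)²`
  have hneg : ((Γ.sign a b * Γ.sign b c * Γ.sign c a : ℤ) : ℝ) * (x a * x b * x c) ^ 2 < 0 := by
    have := mul_neg_of_pos_of_neg (mul_pos_of_neg_of_neg hab' hbc') hca'
    push_cast
    linarith
  have hsign : Γ.sign a b * Γ.sign b c * Γ.sign c a < 0 := by
    by_contra! h
    have : (0 : ℝ) ≤ ((Γ.sign a b * Γ.sign b c * Γ.sign c a : ℤ) : ℝ) := by exact_mod_cast h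
    nlinarith [sq_nonneg (x a * x b * x c)]
  refine h3 (Γ.hasNegCycleOfLength_three (hadj hab) (hadj hbc) (hadj hca) ?_)
  rcases Γ.sign_mem a b (hadj hab) with h1 | h1 <;>
    rcases Γ.sign_mem b c (hadj hbc) with h2 | h2 <;>
      rcases Γ.sign_mem c a (hadj hca) with h3 | h3 <;>
        simp only [h1, h2, h3] at hsign ⊢ <;> omega

theorem neg_dotProduct_adjMatrix_mulVec_le [Fintype V] (h3 : ¬ Γ.HasNegCycleOfLength 3)
    (x : V → ℝ) : -(x ⬝ᵥ Γ.adjMatrix *ᵥ x) ≤ Fintype.card V / 2 * (x ⬝ᵥ x) := by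
  classical
  set H := Γ.negTermGraph x
  have hterm (u v : V) :
      -(Γ.sign u v * (x u * x v)) ≤ if H.Adj u v then |x u| * |x v| else 0 := by
    split_ifs with h
    · calc -(Γ.sign u v * (x u * x v)) ≤ |(Γ.sign u v : ℝ)| * (|x u| * |x v|) := by
            rw [← abs_mul, ← abs_mul]; exact neg_le_abs _
        _ ≤ |x u| * |x v| := by
            refine mul_le_of_le_one_left (by positivity) ?_
            exact_mod_cast Γ.abs_sign_le_one u v
    · exact neg_nonpos.mpr (not_lt.mp h)
  calc -(x ⬝ᵥ Γ.adjMatrix *ᵥ x) = ∑ u, ∑ v, -(Γ.sign u v * (x u * x v)) := by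
        simp only [dotProduct, mulVec, adjMatrix, Finset.mul_sum, ← Finset.sum_neg_distrib]
        exact Finset.sum_congr rfl fun u _ => Finset.sum_congr rfl fun v _ => by ring
    _ ≤ ∑ u, ∑ v, if H.Adj u v then |x u| * |x v| else 0 := by gcongr with u _ v; exact hterm u v
    _ = ∑ u, |x u| * ∑ v ∈ H.neighborFinset u, |x v| := by
        simp [Finset.mul_sum, SimpleGraph.neighborFinset_eq_filter, Finset.sum_filter]
    _ ≤ (∑ u, |x u|) ^ 2 / 2 :=
        (Γ.negTermGraph_cliqueFree h3 x).sum_mul_sum_neighborFinset_le fun _ => abs_nonneg _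
    _ ≤ Fintype.card V / 2 * (x ⬝ᵥ x) := by
        have := sq_sum_le_card_mul_sum_sq (s := Finset.univ) (f := fun u => |x u|)
        simp only [sq_abs, Finset.card_univ] at this
        simp only [dotProduct, ← sq]
        linarith

theorem neg_lambdaMin_le_card_div_two [Fintype V] (h3 : ¬ Γ.HasNegCycleOfLength 3) :
    -Γ.lambdaMin ≤ Fintype.card V / 2 := by
  classical
  cases isEmpty_or_nonempty V
  · simp [lambdaMin]
  obtain ⟨x, hx, hAx⟩ := Γ.adjMatrix_isHermitian.exists_mulVec_eq_sInf_spectrum_smul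
  have hxx : 0 < x ⬝ᵥ x := by simpa using Matrix.dotProduct_star_self_pos_iff.mpr hx
  have := Γ.neg_dotProduct_adjMatrix_mulVec_le h3 x
  rw [hAx, dotProduct_smul, smul_eq_mul, neg_mul_eq_neg_mul] at this
  exact le_of_mul_le_mul_right this hxx

theorem sign_gammaN {n : ℕ} (i j : Fin n) :
    (GammaN n).sign i j = gammaNAux (min i.val j.val) (max i.val j.val) := rfl

theorem gammaNAux_cases (a b : ℕ) :
    gammaNAux a b = 0 ∨ (gammaNAux a b = -1 ∧ a = 0 ∧ b = 1) ∨
      (gammaNAux a b = 1 ∧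
        ((a = 0 ∧ b = 2) ∨ (a = 1 ∧ b = 3) ∨ (2 ≤ a ∧ a < b ∧ ¬(a = 2 ∧ b = 3)))) := by
  unfold gammaNAux
  split_ifs <;> simp_all

-- The only negative edge is `01`; the vertices `0` and `1` have no common neighbour, and their
-- other neighbours `2` and `3` are not adjacent.
theorem gammaNAux_triangle_ne (a b c : ℕ) :
    gammaNAux (min a b) (max a b) * gammaNAux (min b c) (max b c) *
      gammaNAux (min c a) (max c a) ≠ -1 := by
  rcases gammaNAux_cases (min a b) (max a b) with h1 | ⟨h1, _⟩ | ⟨h1, _⟩ <;>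
    rcases gammaNAux_cases (min b c) (max b c) with h2 | ⟨h2, _⟩ | ⟨h2, _⟩ <;>
      rcases gammaNAux_cases (min c a) (max c a) with h3 | ⟨h3, _⟩ | ⟨h3, _⟩ <;>
        rw [h1, h2, h3] <;> norm_num <;> omega

theorem gammaNAux_square_ne (a b c d : ℕ) :
    gammaNAux (min a b) (max a b) * gammaNAux (min b c) (max b c) *
      gammaNAux (min c d) (max c d) * gammaNAux (min d a) (max d a) ≠ -1 := by
  rcases gammaNAux_cases (min a b) (max a b) with h1 | ⟨h1, _⟩ | ⟨h1, _⟩ <;>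
    rcases gammaNAux_cases (min b c) (max b c) with h2 | ⟨h2, _⟩ | ⟨h2, _⟩ <;>
      rcases gammaNAux_cases (min c d) (max c d) with h3 | ⟨h3, _⟩ | ⟨h3, _⟩ <;>
        rcases gammaNAux_cases (min d a) (max d a) with h4 | ⟨h4, _⟩ | ⟨h4, _⟩ <;>
          rw [h1, h2, h3, h4] <;> norm_num <;> omega

theorem gammaN_not_hasNegCycleOfLength_three (n : ℕ) :
    ¬ (GammaN n).HasNegCycleOfLength 3 := by
  rintro ⟨u, w, -, hneg, hlen⟩
  have hend : w.getVert 3 = u := hlen ▸ w.getVert_length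
  rw [walkSign_eq_prod_getVert, hlen] at hneg
  simp only [Finset.prod_range_succ, Finset.prod_range_zero, one_mul, sign_gammaN, hend,
    w.getVert_zero] at hneg
  exact gammaNAux_triangle_ne _ _ _ hneg

theorem gammaN_not_hasNegCycleOfLength_four (n : ℕ) :
    ¬ (GammaN n).HasNegCycleOfLength 4 := by
  rintro ⟨u, w, -, hneg, hlen⟩
  have hend : w.getVert 4 = u := hlen ▸ w.getVert_length
  rw [walkSign_eq_prod_getVert, hlen] at hneg
  simp only [Finset.prod_range_succ, Finset.prod_range_zero, one_mul, sign_gammaN, hend,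
    w.getVert_zero] at hneg
  exact gammaNAux_square_ne _ _ _ _ hneg

theorem gammaN_hasNegCycleOfLength_five {n : ℕ} (hn : 5 ≤ n) :
    (GammaN n).HasNegCycleOfLength 5 := by
  let v : Fin 5 → Fin n := fun i => Fin.castLE hn i
  have hadj (i j : Fin 5) (h : gammaNAux (min i.val j.val) (max i.val j.val) ≠ 0) :
      (GammaN n).G.Adj (v i) (v j) := h
  refine ⟨v 0, .cons (hadj 0 1 (by decide)) (.cons (hadj 1 3 (by decide))
    (.cons (hadj 3 4 (by decide)) (.cons (hadj 4 2 (by decide)) (.cons (hadj 2 0 (by decide))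
    .nil)))), ?_, by simp [sign_gammaN, v, gammaNAux], rfl⟩
  simp [SimpleGraph.Walk.isCycle_def, SimpleGraph.Walk.isTrail_def, v, Sym2.eq, Sym2.rel_iff',
    Fin.ext_iff]

theorem ite_two_le_mul_gammaNAux_mul_ite_two_le (a b : ℕ) :
    (if 2 ≤ a then (1 : ℝ) else 0) * ((gammaNAux (min a b) (max a b) : ℝ) *
      (if 2 ≤ b then 1 else 0)) =
    (if 2 ≤ a then 1 else 0) * (if 2 ≤ b then 1 else 0) -
      (if a = b then (if 2 ≤ a then 1 else 0) else 0) -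
      ((if a = 2 then 1 else 0) * (if b = 3 then 1 else 0) +
        (if a = 3 then 1 else 0) * (if b = 2 then 1 else 0)) := by
  unfold gammaNAux
  split_ifs <;> norm_num <;> omega

theorem card_div_two_lt_lambda1_gammaN {n : ℕ} (hn : 7 ≤ n) :
    (n : ℝ) / 2 < (GammaN n).lambda1 := by
  let e (k : ℕ) (i : Fin n) : ℝ := if i.val = k then 1 else 0
  let y (i : Fin n) : ℝ := if 2 ≤ i.val then 1 else 0
  have hy : ∑ i, y i = n - 2 := by
    rw [Fin.sum_univ_eq_sum_range (fun a => if 2 ≤ a then (1 : ℝ) else 0)]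
    obtain ⟨m, rfl⟩ := Nat.exists_eq_add_of_le' (by omega : 2 ≤ n)
    simp only [Finset.sum_range_succ']
    simp
  have he (k : ℕ) (hk : k < n) : ∑ i, e k i = 1 := by
    rw [Fin.sum_univ_eq_sum_range (fun a => if a = k then (1 : ℝ) else 0)]
    simp [hk]
  have hyy : y ⬝ᵥ y = n - 2 := by
    rw [← hy]
    exact Finset.sum_congr rfl fun i _ => by simp only [y]; split_ifs <;> norm_num
  -- on `{2, …, n-1}` the matrix `A(Γₙ)` is `J - I` minus the missing edge `23`
  have hyAy : y ⬝ᵥ (GammaN n).adjMatrix *ᵥ y = (n - 2) ^ 2 - (n - 2) - 2 := by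
    have hpt (i j : Fin n) : y i * ((GammaN n).adjMatrix i j * y j) =
        y i * y j - (if i = j then y i else 0) - (e 2 i * e 3 j + e 3 i * e 2 j) := by
      simp only [y, e, adjMatrix, sign_gammaN, Fin.ext_iff]
      exact ite_two_le_mul_gammaNAux_mul_ite_two_le i j
    simp only [dotProduct, mulVec, Finset.mul_sum, hpt]
    simp only [Finset.sum_sub_distrib, Finset.sum_add_distrib, Finset.sum_ite_eq, Finset.mem_univ,
      if_true, ← Finset.mul_sum, ← Finset.sum_mul, hy, he 2 (by omega), he 3 (by omega)]
    ring
  have hray := (GammaN n).dotProduct_adjMatrix_mulVec_le_lambda1 y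
  rw [hyAy, hyy] at hray
  have hn' : (7 : ℝ) ≤ n := by exact_mod_cast hn
  by_contra! h
  nlinarith [mul_le_mul_of_nonneg_right h (by linarith : (0 : ℝ) ≤ n - 2),
    mul_nonneg (sub_nonneg.2 hn') (by linarith : (0 : ℝ) ≤ n - 1)]

end SignedGraph

open SignedGraph in
theorem rho_eq_lambda1_of_extremal_general {V : Type u} [Fintype V] (n : ℕ) (hn : 7 ≤ n)
    (hcard : Fintype.card V = n) (Γ : SignedGraph V)
    (h3 : ¬ Γ.HasNegCycleOfLength 3)
    (hmax : ∀ (W : Type v) [Fintype W] (Δ : SignedGraph W), Fintype.card W = n →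
      Δ.Unbalanced → ¬ Δ.HasNegCycleOfLength 3 → ¬ Δ.HasNegCycleOfLength 4 →
      Δ.rho ≤ Γ.rho) :
    Γ.rho = Γ.lambda1 := by
  refine max_eq_left (le_of_not_gt fun hlt => ?_)
  -- `Γₙ` lives on `Fin n`; the competitors live in universe `v`
  let Δ := (GammaN n).comap (Equiv.ulift : ULift.{v} (Fin n) ≃ Fin n)
  have hΔ : Δ.rho ≤ Γ.rho := hmax _ Δ (by simp)
    ((hasNegCycleOfLength_comap_iff _).mpr (gammaN_hasNegCycleOfLength_five (by omega))).unbalanced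
    (mt (hasNegCycleOfLength_comap_iff _).mp (gammaN_not_hasNegCycleOfLength_three n))
    (mt (hasNegCycleOfLength_comap_iff _).mp (gammaN_not_hasNegCycleOfLength_four n))
  have hlow : (n : ℝ) / 2 < Δ.lambda1 :=
    (GammaN n).lambda1_comap Equiv.ulift ▸ card_div_two_lt_lambda1_gammaN hn
  have hup : -Γ.lambdaMin ≤ n / 2 := by
    simpa [hcard] using Γ.neg_lambdaMin_le_card_div_two h3
  have hΔρ : Δ.lambda1 ≤ Δ.rho := le_max_left _ _
  have hΓρ : Γ.rho = -Γ.lambdaMin := max_eq_right hlt.le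
  linarith

open SignedGraph in
/-- For `n ≥ 7`, if `Γ` maximizes the spectral radius among all unbalanced
signed graphs of order `n` with no negative 3-cycle and no negative 4-cycle, then
`ρ(Γ) = λ₁(Γ)`. -/
theorem rho_eq_lambda1_of_extremal {V : Type u} [Fintype V] (n : ℕ) (hn : 7 ≤ n)
    (hcard : Fintype.card V = n) (Γ : SignedGraph V) (hunb : Γ.Unbalanced)
    (h3 : ¬ Γ.HasNegCycleOfLength 3) (h4 : ¬ Γ.HasNegCycleOfLength 4)
    (hmax : ∀ (W : Type v) [Fintype W] (Δ : SignedGraph W), Fintype.card W = n →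
      Δ.Unbalanced → ¬ Δ.HasNegCycleOfLength 3 → ¬ Δ.HasNegCycleOfLength 4 →
      Δ.rho ≤ Γ.rho) :
    Γ.rho = Γ.lambda1 :=
  rho_eq_lambda1_of_extremal_general n hn hcard Γ h3 hmax
end

section
/- Every signed graph Γ is switching equivalent to a signed graph Γ' (with the same underlying graph) such that the largest eigenvalue λ1(Γ') of A(Γ') has an associated eigenvector all of whose entries are non-negative. -/
/-! Switching by `s` multiplies `A(Γ)` on both sides by the diagonal signature matrix
`D = diag(s)`, an involution; hence `λ₁` is unchanged and `D x` is a `λ₁`-eigenvector of the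
switched graph whenever `x` is one of `Γ`. Choosing `s v` to be the sign of `x v` turns `D x`
into the entrywise absolute value `|x|`. -/

open Matrix

theorem spectrum.mul_mul_self_of_mul_self_eq_one {R A : Type*} [CommSemiring R] [Ring A]
    [Algebra R A] {u : A} (hu : u * u = 1) (a : A) :
    spectrum R (u * a * u) = spectrum R a :=
  spectrum.units_conjugate (u := ⟨u, u, hu, hu⟩)

theorem Matrix.mulVec_mulVec_eq_smul_of_mul_self_eq_one {n R : Type*} [Fintype n]
    [DecidableEq n] [CommRing R] {P M : Matrix n n R} (hP : P * P = 1) {x : n → R} {μ : R}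
    (hx : M *ᵥ x = μ • x) : (P * M * P) *ᵥ (P *ᵥ x) = μ • (P *ᵥ x) := by
  rw [mulVec_mulVec, mul_assoc, mul_assoc, hP, mul_one, ← mulVec_mulVec, hx, mulVec_smul]

theorem Matrix.IsHermitian.exists_mulVec_eq_sSup_spectrum_smul {n 𝕜 : Type*} [Fintype n]
    [DecidableEq n] [Nonempty n] [RCLike 𝕜] {A : Matrix n n 𝕜} (hA : A.IsHermitian) :
    ∃ x : n → 𝕜, x ≠ 0 ∧ A *ᵥ x = sSup (spectrum ℝ A) • x := by
  obtain ⟨i, hi⟩ : sSup (spectrum ℝ A) ∈ Set.range hA.eigenvalues := by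
    rw [hA.spectrum_real_eq_range_eigenvalues]
    exact (Set.range_nonempty _).csSup_mem (Set.finite_range _)
  exact ⟨_, (WithLp.ofLp_eq_zero 2).ne.2 <| hA.eigenvectorBasis.orthonormal.ne_zero i,
    hi ▸ hA.mulVec_eigenvectorBasis i⟩

namespace SignedGraph

variable {V : Type*}

theorem isHermitian_adjMatrix (Γ : SignedGraph V) : Γ.adjMatrix.IsHermitian := by
  ext u v
  simp [adjMatrix, Γ.sign_symm u v]

theorem exists_mulVec_eq_lambda1_smul [Fintype V] [Nonempty V] (Γ : SignedGraph V) :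
    ∃ x : V → ℝ, x ≠ 0 ∧ Γ.adjMatrix *ᵥ x = Γ.lambda1 • x := by
  classical
  exact Γ.isHermitian_adjMatrix.exists_mulVec_eq_sSup_spectrum_smul

def switch (Γ : SignedGraph V) (s : V → ℤ) (hs : ∀ v, s v = 1 ∨ s v = -1) :
    SignedGraph V where
  G := Γ.G
  sign u v := s u * Γ.sign u v * s v
  sign_symm u v := by
    rw [Γ.sign_symm u v]
    ring
  sign_mem u v h := by
    rcases hs u with hu | hu <;> rcases hs v with hv | hv <;>
      rcases Γ.sign_mem u v h with huv | huv <;> simp [hu, hv, huv]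
  sign_not u v h := by simp [Γ.sign_not u v h]

def signatureMatrix [DecidableEq V] (s : V → ℤ) : Matrix V V ℝ :=
  diagonal fun v => (s v : ℝ)

theorem signatureMatrix_mul_self [Fintype V] [DecidableEq V] {s : V → ℤ}
    (hs : ∀ v, s v = 1 ∨ s v = -1) : signatureMatrix s * signatureMatrix s = 1 := by
  rw [signatureMatrix, diagonal_mul_diagonal, ← diagonal_one]
  congr 1
  funext v
  rcases hs v with h | h <;> simp [h]

variable {s : V → ℤ} (hs : ∀ v, s v = 1 ∨ s v = -1)

theorem switchingEquivalent_switch (Γ : SignedGraph V) :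
    Γ.SwitchingEquivalent (Γ.switch s hs) :=
  ⟨rfl, s, hs, fun _ _ => rfl⟩

theorem adjMatrix_switch [Fintype V] [DecidableEq V] (Γ : SignedGraph V) :
    (Γ.switch s hs).adjMatrix = signatureMatrix s * Γ.adjMatrix * signatureMatrix s := by
  ext u v
  simp [adjMatrix, switch, signatureMatrix, diagonal_mul, mul_diagonal]

theorem lambda1_switch [Fintype V] (Γ : SignedGraph V) :
    (Γ.switch s hs).lambda1 = Γ.lambda1 := by
  classical
  simp only [lambda1]
  rw [adjMatrix_switch hs, spectrum.mul_mul_self_of_mul_self_eq_one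
    (signatureMatrix_mul_self hs)]

end SignedGraph

open SignedGraph in
/-- Every signed graph is switching equivalent to a signed graph whose largest
eigenvalue admits an eigenvector with all entries non-negative. -/
theorem exists_switching_with_nonneg_eigenvector {V : Type*} [Fintype V] [Nonempty V]
    (Γ : SignedGraph V) :
    ∃ Γ' : SignedGraph V, Γ.SwitchingEquivalent Γ' ∧
      ∃ x : V → ℝ, x ≠ 0 ∧ Γ'.adjMatrix.mulVec x = Γ'.lambda1 • x ∧ ∀ v, 0 ≤ x v := by
  classical
  obtain ⟨x, hx0, hx⟩ := Γ.exists_mulVec_eq_lambda1_smul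
  let s : V → ℤ := fun v => if 0 ≤ x v then 1 else -1
  have hs : ∀ v, s v = 1 ∨ s v = -1 := fun v => by
    by_cases h : 0 ≤ x v <;> simp [s, h]
  have habs : signatureMatrix s *ᵥ x = fun v => |x v| := by
    funext v
    by_cases h : 0 ≤ x v
    · simp [s, signatureMatrix, mulVec_diagonal, h, abs_of_nonneg h]
    · simp [s, signatureMatrix, mulVec_diagonal, h, abs_of_neg (not_le.mp h)]
  refine ⟨Γ.switch s hs, Γ.switchingEquivalent_switch hs, fun v => |x v|, ?_, ?_,
    fun v => abs_nonneg (x v)⟩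
  · exact fun h => hx0 (funext fun v => abs_eq_zero.mp (congrFun h v))
  · rw [lambda1_switch, adjMatrix_switch, ← habs]
    exact mulVec_mulVec_eq_smul_of_mul_self_eq_one (signatureMatrix_mul_self hs) hx
end
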